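/- Let G be a finite Fitting-free group and N a normal subgroup of G. Then Soc(G) = Soc(N) × Soc(C_G(Soc(N))), i.e., the socle of G is the internal direct product of the socle of N and the socle of the centralizer of Soc(N) in G. -/

import Mathlib

def IsMinimalNormal {G : Type*} [Group G] (N : Subgroup G) : Prop :=
  N ≠ ⊥ ∧ N.Normal ∧ ∀ M : Subgroup G, M.Normal → M ≤ N → M = ⊥ ∨ M = N

def socle (G : Type*) [Group G] : Subgroup G :=
  ⨆ N ∈ {N : Subgroup G | IsMinimalNormal N}, N

def FittingFree (G : Type*) [Group G] : Prop :=
  ∀ N : Subgroup G, N.Normal → IsMulCommutative ↥N → N = ⊥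

/-! The socle of `N` is characteristic in `N`, hence normal in `G`, and so is its centralizer `C`;
Fitting-freeness gives `Soc(N) ∩ C = 1`. A minimal normal subgroup of `G` either lies in `N` or
meets `N` trivially and then centralizes `N`; either way it lies in `Soc(N)` or in `Soc(C)`.
Conversely, a minimal normal subgroup `B` of a normal subgroup `K` lies in `Soc(G)`: take a minimal
normal subgroup `M` of `G` inside the normal closure `L` of `B`. If `B` centralized `M`, so would
`L`, and `M ≤ L ∩ C_G(L) = 1`; hence `B ∩ M ≠ 1`, and `B ≤ M` by minimality of `B` in `K`. -/

open Subgroup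

section Socle

variable {G : Type*} [Group G]

lemma socle_le_iff {H : Subgroup G} : socle G ≤ H ↔ ∀ M, IsMinimalNormal M → M ≤ H :=
  iSup₂_le_iff

lemma exists_isMinimalNormal_le [Finite G] {H : Subgroup G} (hH : H.Normal) (hne : H ≠ ⊥) :
    ∃ M, IsMinimalNormal M ∧ M ≤ H := by
  obtain ⟨M, hMH, ⟨hMne, hMnormal⟩, hmin⟩ :=
    exists_minimal_le_of_wellFoundedLT (fun M : Subgroup G ↦ M ≠ ⊥ ∧ M.Normal) H ⟨hne, hH⟩
  refine ⟨M, ⟨hMne, hMnormal, fun M' hM' hle ↦ ?_⟩, hMH⟩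
  by_cases hM'ne : M' = ⊥
  · exact .inl hM'ne
  · exact .inr (le_antisymm hle (hmin ⟨hM'ne, hM'⟩ hle))

namespace IsMinimalNormal

variable {M : Subgroup G}

lemma le_socle (hM : IsMinimalNormal M) : M ≤ socle G :=
  socle_le_iff.mp le_rfl M hM

lemma inf_eq_bot_or_le (hM : IsMinimalNormal M) (H : Subgroup G) [H.Normal] :
    M ⊓ H = ⊥ ∨ M ≤ H :=
  have := hM.2.1
  (hM.2.2 (M ⊓ H) inferInstance inf_le_left).imp_right inf_eq_left.mp

lemma map_mulEquiv {G' : Type*} [Group G'] (hM : IsMinimalNormal M) (e : G ≃* G') :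
    IsMinimalNormal (M.map e.toMonoidHom) := by
  obtain ⟨hne, hnormal, hmin⟩ := hM
  refine ⟨(map_eq_bot_iff_of_injective _ e.injective).not.mpr hne, hnormal.map _ e.surjective,
    fun M' hM' hle ↦ ?_⟩
  have hM'eq : (M'.comap e.toMonoidHom).map e.toMonoidHom = M' :=
    map_comap_eq_self_of_surjective e.surjective M'
  rcases hmin _ (hM'.comap _) ((map_le_iff_le_comap.mp (hM'eq.le.trans hle)).trans
    (comap_map_eq_self_of_injective e.injective M).le) with h | h
  · exact .inl (by rw [← hM'eq, h, Subgroup.map_bot])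
  · exact .inr (by rw [← hM'eq, h])

end IsMinimalNormal

instance socle_characteristic : (socle G).Characteristic :=
  characteristic_iff_le_comap.mpr fun φ ↦ socle_le_iff.mpr fun _ hM ↦
    map_le_iff_le_comap.mp (hM.map_mulEquiv φ).le_socle

lemma IsMinimalNormal.le_socle_map_subtype [Finite G] {M K : Subgroup G} [K.Normal]
    (hM : IsMinimalNormal M) (hMK : M ≤ K) : M ≤ (socle K).map K.subtype := by
  have hMK_ne : M.subgroupOf K ≠ ⊥ := fun h ↦
    hM.1 (disjoint_self.mp ((subgroupOf_eq_bot.mp h).mono_right hMK))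
  obtain ⟨B, hB, hBM⟩ := exists_isMinimalNormal_le (hM.2.1.subgroupOf K) hMK_ne
  refine (hM.inf_eq_bot_or_le _).resolve_left fun h ↦ hB.1 ?_
  apply (map_eq_bot_iff_of_injective _ K.subtype_injective).mp
  refine le_bot_iff.mp (h ▸ le_inf ?_ (map_mono hB.le_socle))
  exact (map_mono hBM).trans ((subgroupOf_map_subtype M K).trans_le inf_le_left)

end Socle

namespace FittingFree

variable {G : Type*} [Group G]

lemma inf_centralizer_eq_bot (hG : FittingFree G) (M : Subgroup G) [M.Normal] :
    M ⊓ centralizer (M : Set G) = ⊥ :=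
  hG _ inferInstance <| le_centralizer_iff_isMulCommutative.mp fun _ hx _ hy ↦
    (mem_centralizer_iff.mp hy.2 _ hx.1).symm

lemma map_subtype_le_socle [Finite G] (hG : FittingFree G) {K : Subgroup G} [K.Normal]
    {B : Subgroup K} (hB : IsMinimalNormal B) : B.map K.subtype ≤ socle G := by
  set L := normalClosure (B.map K.subtype : Set G)
  have hBL : B.map K.subtype ≤ L := le_normalClosure
  have hL_ne : L ≠ ⊥ := fun h ↦
    hB.1 ((map_eq_bot_iff_of_injective _ K.subtype_injective).mp (le_bot_iff.mp (h ▸ hBL)))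
  obtain ⟨M, hM, hML⟩ := exists_isMinimalNormal_le normalClosure_normal hL_ne
  have := hM.2.1
  have hMK : M ≤ K := hML.trans (normalClosure_le_normal (map_subtype_le B))
  have hB_not_le : ¬ B.map K.subtype ≤ centralizer (M : Set G) := fun h ↦ hM.1 <| le_bot_iff.mp <|
    (le_inf hML (le_centralizer_iff.mp (normalClosure_le_normal h))).trans_eq
      (hG.inf_centralizer_eq_bot L)
  have hBM : B ≤ M.subgroupOf K := by
    refine (hB.inf_eq_bot_or_le _).resolve_left fun h ↦ hB_not_le ?_
    rintro _ ⟨b, hb, rfl⟩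
    refine mem_centralizer_iff.mpr fun m hm ↦ ?_
    have := commute_of_normal_of_disjoint _ _ hB.2.1 (hM.2.1.subgroupOf K) (disjoint_iff.mpr h)
      b ⟨m, hMK hm⟩ hb (mem_subgroupOf.mpr hm)
    exact congrArg Subtype.val this.symm
  calc B.map K.subtype ≤ (M.subgroupOf K).map K.subtype := map_mono hBM
    _ ≤ M := (subgroupOf_map_subtype M K).trans_le inf_le_left
    _ ≤ socle G := hM.le_socle

lemma socle_map_subtype_le [Finite G] (hG : FittingFree G) (K : Subgroup G) [K.Normal] :
    (socle K).map K.subtype ≤ socle G :=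
  map_le_iff_le_comap.mpr <| socle_le_iff.mpr fun _ hB ↦
    map_le_iff_le_comap.mp (hG.map_subtype_le_socle hB)

end FittingFree

theorem stmt4 {G : Type*} [Group G] [Finite G] (hG : FittingFree G)
    (N : Subgroup G) (hN : N.Normal) :
    ∀ S1 : Subgroup G, S1 = (socle ↥N).map N.subtype →
    ∀ C : Subgroup G, C = Subgroup.centralizer (S1 : Set G) →
    ∀ S2 : Subgroup G, S2 = (socle ↥C).map C.subtype →
    (∀ x ∈ S1, ∀ y ∈ S2, Commute x y) ∧ S1 ⊓ S2 = ⊥ ∧ S1 ⊔ S2 = socle G := by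
  rintro S1 rfl C rfl S2 rfl
  refine ⟨fun x hx y hy ↦ mem_centralizer_iff.mp (map_subtype_le _ hy) x hx, ?_, ?_⟩
  · exact le_bot_iff.mp ((inf_le_inf_left _ (map_subtype_le _)).trans_eq
      (hG.inf_centralizer_eq_bot _))
  refine le_antisymm (sup_le (hG.socle_map_subtype_le N) (hG.socle_map_subtype_le _))
    (socle_le_iff.mpr fun M hM ↦ ?_)
  rcases hM.inf_eq_bot_or_le N with hMN | hMN
  · have hM_centralizes : M ≤ centralizer (N : Set G) := fun m hm ↦ mem_centralizer_iff.mpr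
      fun n hn ↦ (commute_of_normal_of_disjoint _ _ hM.2.1 hN (disjoint_iff.mpr hMN) m n hm hn).symm
    exact le_sup_of_le_right <| hM.le_socle_map_subtype <|
      hM_centralizes.trans (centralizer_le (map_subtype_le _))
  · exact le_sup_of_le_left (hM.le_socle_map_subtype hMN)
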